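/- arXiv:2312.06595 — 2 statements merged into one kernel-verified Lean document; each statement's English description precedes it below -/
import Mathlib

section
/- On the homogeneous tree 𝔗_b (b ≥ 2), the uncentred base maximal operator ℬ^u is unbounded on L^1: for a point o in a fixed horocycle ℌ_0, the function ℬ^u δ_o equals b^{−|x|/2} for x in ℌ_0 (where |x| = d(o,x)), and ∑_{x ∈ ℌ_0} ℬ^u δ_o(x) = ∞. -/
open scoped ENNReal NNReal
open Set

/-- A locally finite tree presented via the data induced by a fixed geodesic ray `ω`:
a predecessor map `pred`, a height (Busemann) function `ht` increasing by one along `pred`,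
finite successor sets, and connectedness (any two vertices have a common ancestor). -/
structure TreeData (V : Type*) where
  pred : V → V
  ht : V → ℤ
  ht_pred : ∀ x, ht (pred x) = ht x + 1
  fiber_finite : ∀ x, {y | pred y = x}.Finite
  connected : ∀ x y, ∃ k l : ℕ, pred^[k] x = pred^[l] y

namespace TreeData

variable {V : Type*}

/-- The set of successors of a vertex. -/
def succs (t : TreeData V) (x : V) : Set V := {y | t.pred y = x}

/-- Every vertex has at least 3 neighbours, i.e. at least 2 successors. -/
def Thick (t : TreeData V) : Prop := ∀ x, 2 ≤ (t.succs x).ncard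

/-- Homogeneous tree `𝔗_b`: every vertex has exactly `b+1` neighbours, i.e. `b` successors. -/
def Homog (t : TreeData V) (b : ℕ) : Prop := ∀ x, (t.succs x).ncard = b

/-- The triangle with vertex `x` and height `R`: all descendants of `x` within `R` generations. -/
def tri (t : TreeData V) (x : V) (R : ℕ) : Set V := {y | ∃ j ≤ R, t.pred^[j] y = x}

/-- The base of the triangle with vertex `x` and height `R`: the `R`-fold successors of `x`. -/
def base (t : TreeData V) (x : V) (R : ℕ) : Set V := {y | t.pred^[R] y = x}

/-- The graph distance on the tree. -/
noncomputable def dist (t : TreeData V) (x y : V) : ℕ :=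
  sInf {n | ∃ k l : ℕ, k + l = n ∧ t.pred^[k] x = t.pred^[l] y}

/-- Number of points of a set, as an element of `ℝ≥0∞` (counting measure). -/
noncomputable def esize (E : Set V) : ℝ≥0∞ := ∑' _ : E, (1 : ℝ≥0∞)

/-- The average of `|f|` over a set, with respect to counting measure. -/
noncomputable def setAvg (t : TreeData V) (S : Set V) (f : V → ℝ) : ℝ≥0∞ :=
  (∑' y : S, (‖f y‖₊ : ℝ≥0∞)) / (S.ncard : ℝ≥0∞)

/-- The centred triangular maximal operator `𝒯`. -/
noncomputable def cmax (t : TreeData V) (f : V → ℝ) (x : V) : ℝ≥0∞ :=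
  ⨆ R : ℕ, t.setAvg (t.tri x R) f

/-- The uncentred triangular maximal operator `𝒰`. -/
noncomputable def umax (t : TreeData V) (f : V → ℝ) (x : V) : ℝ≥0∞ :=
  ⨆ (v : V) (R : ℕ) (_ : x ∈ t.tri v R), t.setAvg (t.tri v R) f

/-- The uncentred base maximal operator `ℬᵘ`. -/
noncomputable def ubmax (t : TreeData V) (f : V → ℝ) (x : V) : ℝ≥0∞ :=
  ⨆ (v : V) (R : ℕ) (_ : x ∈ t.tri v R), t.setAvg (t.base v R) f

/-- The modified triangle `T'_r(x) = T_r(x) ∪ {p^r(x)}`. -/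
def mtri (t : TreeData V) (x : V) (r : ℕ) : Set V := t.tri x r ∪ {t.pred^[r] x}

/-- The modified centred triangular maximal operator `𝒯'`. -/
noncomputable def cmax' (t : TreeData V) (f : V → ℝ) (x : V) : ℝ≥0∞ :=
  ⨆ r : ℕ, t.setAvg (t.mtri x r) f

/-- The modified uncentred triangular maximal operator `𝒰'`. -/
noncomputable def umax' (t : TreeData V) (f : V → ℝ) (x : V) : ℝ≥0∞ :=
  ⨆ (v : V) (r : ℕ) (_ : x ∈ t.mtri v r), t.setAvg (t.mtri v r) f

/-- The `ℓ^p` norm with respect to counting measure, for `p ∈ [1,∞]`. -/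
noncomputable def eLp (p : ℝ≥0∞) (g : V → ℝ≥0∞) : ℝ≥0∞ :=
  if p = ∞ then ⨆ v, g v else (∑' v, g v ^ p.toReal) ^ (1 / p.toReal)

/-- `|f|` as an `ℝ≥0∞`-valued function. -/
noncomputable def nn (f : V → ℝ) (x : V) : ℝ≥0∞ := (‖f x‖₊ : ℝ≥0∞)

/-- The point mass at `o`. -/
noncomputable def delta (o : V) : V → ℝ := ({o} : Set V).indicator fun _ => 1

end TreeData

/-! For `x` on the horocycle of `o`, let `m` be the level at which the ancestor lines of `o` and `x`
merge, so that `d(o, x) = 2m`. A base `β(T)` containing `o` of a triangle `T ∋ x` has `b^R` points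
with `R ≥ m`, and the triangle of height `m` over the common ancestor attains `b^{-m}`; hence
`ℬᵘδ_o(x) = b^{-m}`. The points with `m = n + 1` form the difference of two nested bases, which has
`b^{n+1} - b^n ≥ b^n` points, so each level contributes at least `1/b` to the sum. -/

open Function

namespace TreeData

variable {V : Type*} (t : TreeData V)

/-- Junk value `0` when `x` and `y` have different heights, as the set is then empty. -/
noncomputable def meetLevel (x y : V) : ℕ := sInf {k | t.pred^[k] x = t.pred^[k] y}

lemma ht_iterate_pred (x : V) (k : ℕ) : t.ht (t.pred^[k] x) = t.ht x + k := by
  induction k with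
  | zero => simp
  | succ k ih =>
    rw [iterate_succ_apply', t.ht_pred, ih]
    push_cast
    ring

lemma eq_of_iterate_pred_eq {x y : V} (hxy : t.ht x = t.ht y) {k l : ℕ}
    (h : t.pred^[k] x = t.pred^[l] y) : k = l := by
  have := congrArg t.ht h
  rw [t.ht_iterate_pred, t.ht_iterate_pred, hxy] at this
  exact_mod_cast add_left_cancel this

lemma exists_iterate_pred_eq {x y : V} (hxy : t.ht x = t.ht y) :
    ∃ k, t.pred^[k] x = t.pred^[k] y := by
  obtain ⟨k, l, h⟩ := t.connected x y
  obtain rfl := t.eq_of_iterate_pred_eq hxy h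
  exact ⟨k, h⟩

lemma iterate_meetLevel {x y : V} (hxy : t.ht x = t.ht y) :
    t.pred^[t.meetLevel x y] x = t.pred^[t.meetLevel x y] y :=
  Nat.sInf_mem (t.exists_iterate_pred_eq hxy)

lemma meetLevel_le {x y : V} {k : ℕ} (h : t.pred^[k] x = t.pred^[k] y) : t.meetLevel x y ≤ k :=
  Nat.sInf_le h

lemma dist_eq_two_mul_meetLevel {x y : V} (hxy : t.ht x = t.ht y) :
    t.dist x y = 2 * t.meetLevel x y := by
  refine le_antisymm (Nat.sInf_le ⟨_, _, (two_mul _).symm, t.iterate_meetLevel hxy⟩) ?_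
  refine le_csInf ⟨_, _, _, rfl, t.iterate_meetLevel hxy⟩ ?_
  rintro n ⟨k, l, rfl, h⟩
  obtain rfl := t.eq_of_iterate_pred_eq hxy h
  have := t.meetLevel_le h
  omega

lemma base_succ (v : V) (R : ℕ) : t.base v (R + 1) = t.pred ⁻¹' t.base v R := by
  ext y
  simp [base, iterate_succ_apply]

lemma base_subset_base_pred (v : V) (R : ℕ) : t.base v R ⊆ t.base (t.pred v) (R + 1) := by
  intro y hy
  simp only [base, mem_ofPred_eq, iterate_succ_apply'] at hy ⊢
  rw [hy]

lemma ht_of_mem_base {v y : V} {R : ℕ} (hy : y ∈ t.base v R) : t.ht y + R = t.ht v := by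
  rw [← t.ht_iterate_pred, hy]

lemma finite_base (v : V) (R : ℕ) : (t.base v R).Finite := by
  induction R with
  | zero => simp [base]
  | succ R ih => exact t.base_succ v R ▸ ih.preimage' fun x _ => t.fiber_finite x

lemma ncard_preimage_pred {b : ℕ} (hhom : t.Homog b) {S : Set V} (hS : S.Finite) :
    (t.pred ⁻¹' S).ncard = b * S.ncard := by
  induction S, hS using Set.Finite.induction_on with
  | empty => simp
  | @insert a S haS hS ih =>
    have hpre : t.pred ⁻¹' insert a S = t.succs a ∪ t.pred ⁻¹' S := rfl
    have hdisj : Disjoint (t.succs a) (t.pred ⁻¹' S) :=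
      Set.disjoint_left.2 fun y hy hy' => haS (hy ▸ hy')
    rw [hpre, Set.ncard_union_eq hdisj (t.fiber_finite a)
      (hS.preimage' fun x _ => t.fiber_finite x), hhom a, ih, Set.ncard_insert_of_notMem haS hS]
    ring

lemma ncard_base {b : ℕ} (hhom : t.Homog b) (v : V) (R : ℕ) : (t.base v R).ncard = b ^ R := by
  induction R with
  | zero => simp [base]
  | succ R ih => rw [t.base_succ, t.ncard_preimage_pred hhom (t.finite_base v R), ih, pow_succ']

lemma setAvg_delta (S : Set V) (o : V) :
    t.setAvg S (delta o) = S.indicator (fun _ => (S.ncard : ℝ≥0∞)⁻¹) o := by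
  rw [setAvg, tsum_subtype S fun y => (‖delta o y‖₊ : ℝ≥0∞), tsum_eq_single o]
  · by_cases ho : o ∈ S <;> simp [delta, ho]
  · intro y hy
    simp [delta, hy]

variable {t} {b : ℕ}

lemma setAvg_base_delta (hhom : t.Homog b) (v o : V) (R : ℕ) :
    t.setAvg (t.base v R) (delta o) = (t.base v R).indicator (fun _ => ((b : ℝ≥0∞) ^ R)⁻¹) o := by
  rw [setAvg_delta, t.ncard_base hhom]
  push_cast
  rfl

lemma inv_pow_le_ubmax_delta (hhom : t.Homog b) {o x : V} {k : ℕ}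
    (h : t.pred^[k] x = t.pred^[k] o) : ((b : ℝ≥0∞) ^ k)⁻¹ ≤ t.ubmax (delta o) x := by
  have hx : x ∈ t.tri (t.pred^[k] o) k := ⟨k, le_rfl, h⟩
  have hval := setAvg_base_delta hhom (t.pred^[k] o) o k
  rw [indicator_of_mem (show o ∈ t.base (t.pred^[k] o) k from rfl)] at hval
  exact hval ▸ le_iSup₂_of_le (t.pred^[k] o) k (le_iSup_of_le hx le_rfl)

lemma ubmax_delta_le (hb : 1 ≤ b) (hhom : t.Homog b) {o x : V} (hxo : t.ht x = t.ht o) :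
    t.ubmax (delta o) x ≤ ((b : ℝ≥0∞) ^ t.meetLevel o x)⁻¹ := by
  refine iSup₂_le fun v R => iSup_le fun ⟨j, hjR, hj⟩ => ?_
  rw [setAvg_base_delta hhom]
  by_cases ho : o ∈ t.base v R
  · rw [indicator_of_mem ho]
    replace ho : t.pred^[R] o = v := ho
    obtain rfl : j = R := t.eq_of_iterate_pred_eq hxo (hj.trans ho.symm)
    gcongr
    · exact_mod_cast hb
    · exact t.meetLevel_le (ho.trans hj.symm)
  · rw [indicator_of_notMem ho]
    exact zero_le

lemma ubmax_delta_eq (hb : 1 ≤ b) (hhom : t.Homog b) {o x : V} (hxo : t.ht x = t.ht o) :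
    t.ubmax (delta o) x = ((b : ℝ≥0∞) ^ t.meetLevel o x)⁻¹ :=
  (ubmax_delta_le hb hhom hxo).antisymm
    (inv_pow_le_ubmax_delta hhom (t.iterate_meetLevel hxo.symm).symm)

lemma monotone_base_iterate_pred (v : V) : Monotone fun n => t.base (t.pred^[n] v) n :=
  monotone_nat_of_le_succ fun n => by
    simpa only [iterate_succ_apply'] using t.base_subset_base_pred (t.pred^[n] v) n

lemma pow_le_ncard_base_pred_diff (hb : 2 ≤ b) (hhom : t.Homog b) (v : V) (n : ℕ) :
    b ^ n ≤ (t.base (t.pred v) (n + 1) \ t.base v n).ncard := by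
  rw [Set.ncard_sdiff (t.base_subset_base_pred v n) (t.finite_base v n), t.ncard_base hhom,
    t.ncard_base hhom, pow_succ]
  have := Nat.mul_le_mul_left (b ^ n) hb
  omega

lemma inv_le_tsum_ubmax_delta_diff (hb : 2 ≤ b) (hhom : t.Homog b) (o : V) (n : ℕ) :
    (b : ℝ≥0∞)⁻¹ ≤ ∑' x : ↑(t.base (t.pred^[n + 1] o) (n + 1) \ t.base (t.pred^[n] o) n),
      t.ubmax (delta o) x := by
  set S := t.base (t.pred^[n + 1] o) (n + 1) \ t.base (t.pred^[n] o) n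
  have hb0 : (b : ℝ≥0∞) ^ n ≠ 0 := pow_ne_zero n (by simp; omega)
  have hbtop : (b : ℝ≥0∞) ^ n ≠ ∞ := ENNReal.pow_ne_top (ENNReal.natCast_ne_top b)
  have hcard : ((b ^ n : ℕ) : ℝ≥0∞) ≤ S.encard := by
    rw [← ((t.finite_base _ _).sdiff).cast_ncard_eq, ENat.toENNReal_coe, Nat.cast_le]
    simpa only [S, iterate_succ_apply'] using
      pow_le_ncard_base_pred_diff hb hhom (t.pred^[n] o) n
  calc (b : ℝ≥0∞)⁻¹ = (b : ℝ≥0∞) ^ n * ((b : ℝ≥0∞) ^ (n + 1))⁻¹ := by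
        rw [pow_succ, ENNReal.mul_inv (.inl hb0) (.inl hbtop), ← mul_assoc,
          ENNReal.mul_inv_cancel hb0 hbtop, one_mul]
    _ ≤ S.encard * ((b : ℝ≥0∞) ^ (n + 1))⁻¹ := by
        gcongr
        exact_mod_cast hcard
    _ = ∑' _ : S, ((b : ℝ≥0∞) ^ (n + 1))⁻¹ := (ENNReal.tsum_set_const S _).symm
    _ ≤ ∑' x : S, t.ubmax (delta o) x :=
        ENNReal.tsum_le_tsum fun x => inv_pow_le_ubmax_delta hhom x.2.1

lemma tsum_ubmax_delta_eq_top (hb : 2 ≤ b) (hhom : t.Homog b) (o : V) :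
    ∑' x : {x | t.ht x = t.ht o}, t.ubmax (delta o) x = ∞ := by
  set B := fun n => t.base (t.pred^[n] o) n
  have hdisj : Pairwise (Disjoint on fun n => B (n + 1) \ B n) :=
    pairwise_disjoint_on _ |>.2 fun m n hmn => Set.disjoint_left.2 fun x hx hx' =>
      hx'.2 (t.monotone_base_iterate_pred o hmn hx.1)
  have hsub : (⋃ n, B (n + 1) \ B n) ⊆ {x | t.ht x = t.ht o} := by
    simp only [Set.iUnion_subset_iff]
    intro n x hx
    have := t.ht_of_mem_base hx.1
    rw [t.ht_iterate_pred] at this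
    exact add_right_cancel this
  refine top_unique ?_
  calc ∞ = ∑' _ : ℕ, (b : ℝ≥0∞)⁻¹ := (ENNReal.tsum_const_eq_top_of_ne_zero
          (ENNReal.inv_ne_zero.2 (ENNReal.natCast_ne_top b))).symm
    _ ≤ ∑' n, ∑' x : ↑(B (n + 1) \ B n), t.ubmax (delta o) x :=
        ENNReal.tsum_le_tsum fun n => inv_le_tsum_ubmax_delta_diff hb hhom o n
    _ = ∑' x : ⋃ n, B (n + 1) \ B n, t.ubmax (delta o) x :=
        (ENNReal.tsum_biUnion fun m _ n _ hmn => hdisj hmn).symm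
    _ ≤ _ := ENNReal.tsum_mono_subtype _ hsub

end TreeData

/-- On `𝔗_b`, `ℬᵘδ_o(x) = b^{-|x|/2}` for `x` in the horocycle of `o`,
and `∑_{x ∈ ℌ_0} ℬᵘδ_o(x) = ∞`; hence `ℬᵘ` is unbounded on `L^1(𝔗_b)`. -/
theorem stmt7 {V : Type*} (t : TreeData V) (b : ℕ) (hb : 2 ≤ b) (hhom : t.Homog b)
    (o : V) (ho : t.ht o = 0) :
    (∀ x, t.ht x = 0 →
        t.ubmax (TreeData.delta o) x = ((b : ℝ≥0∞) ^ (t.dist o x / 2))⁻¹) ∧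
      ∑' x : {x | t.ht x = 0}, t.ubmax (TreeData.delta o) x = ∞ := by
  refine ⟨fun x hx => ?_, ho ▸ TreeData.tsum_ubmax_delta_eq_top hb hhom o⟩
  have hxo : t.ht x = t.ht o := hx.trans ho.symm
  rw [TreeData.ubmax_delta_eq (by omega) hhom hxo, t.dist_eq_two_mul_meetLevel hxo.symm,
    Nat.mul_div_cancel_left _ two_pos]
end

section
/- Let 𝒢 be a finite collection of maximal triangles in 𝔗 with union G. Then for every r in [1,∞), ‖∑_{T∈𝒢} 1_T‖_r ≤ A_r ‖1_G‖_r, where A_r := (4 ∑_{k=1}^∞ k^r 2^{−k})^{1/r}. -/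
open scoped ENNReal NNReal
open Set

namespace TreeData

variable {V : Type*}

lemma ht_iterate (t : TreeData V) (x : V) (j : ℕ) :
    t.ht (t.pred^[j] x) = t.ht x + j := by
  induction j with
  | zero => simp
  | succ n ih =>
    rw [Function.iterate_succ_apply', t.ht_pred, ih]
    push_cast; ring

lemma iterate_inj (t : TreeData V) {x : V} {j j' : ℕ}
    (h : t.pred^[j] x = t.pred^[j'] x) : j = j' := by
  have := t.ht_iterate x j
  rw [h, t.ht_iterate x j'] at this
  omega

lemma base_zero (t : TreeData V) (x : V) : t.base x 0 = {x} := by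
  ext y; simp [base]

lemma base_succ_s9 (t : TreeData V) (x : V) (j : ℕ) :
    t.base x (j + 1) = ⋃ z ∈ t.succs x, t.base z j := by
  ext y
  simp only [base, Set.mem_setOf_eq, Set.mem_iUnion, succs, exists_prop]
  rw [Function.iterate_succ_apply']
  constructor
  · intro h; exact ⟨t.pred^[j] y, h, rfl⟩
  · rintro ⟨z, hz, rfl⟩; exact hz

lemma base_finite (t : TreeData V) (j : ℕ) : ∀ x : V, (t.base x j).Finite := by
  induction j with
  | zero => intro x; rw [base_zero]; exact Set.finite_singleton x
  | succ n ih =>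
    intro x
    rw [base_succ_s9]
    exact Set.Finite.biUnion (t.fiber_finite x) (fun z _ => ih z)

lemma base_card (t : TreeData V) (hthick : t.Thick) (j : ℕ) :
    ∀ x : V, 2 ^ j ≤ (t.base x j).ncard := by
  induction j with
  | zero => intro x; rw [base_zero]; simp
  | succ n ih =>
    intro x
    have hfin : (t.succs x).Finite := t.fiber_finite x
    have h2 : 1 < (t.succs x).ncard := hthick x
    obtain ⟨a, b, ha, hb, hab⟩ := (Set.one_lt_ncard_iff hfin).1 h2
    have hsub : t.base a n ∪ t.base b n ⊆ t.base x (n + 1) := by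
      rw [base_succ_s9]
      apply Set.union_subset
      · exact Set.subset_biUnion_of_mem (u := fun z => t.base z n) ha
      · exact Set.subset_biUnion_of_mem (u := fun z => t.base z n) hb
    have hdisj : Disjoint (t.base a n) (t.base b n) := by
      rw [Set.disjoint_left]
      intro y hy hy'
      exact hab (hy.symm.trans hy')
    calc 2 ^ (n + 1) = 2 ^ n + 2 ^ n := by ring
    _ ≤ (t.base a n).ncard + (t.base b n).ncard := Nat.add_le_add (ih a) (ih b)
    _ = (t.base a n ∪ t.base b n).ncard :=
        (Set.ncard_union_eq hdisj (t.base_finite n a) (t.base_finite n b)).symm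
    _ ≤ (t.base x (n + 1)).ncard :=
        Set.ncard_le_ncard hsub (t.base_finite (n + 1) x)

lemma tri_eq_biUnion (t : TreeData V) (x : V) (R : ℕ) :
    t.tri x R = ⋃ j ∈ Finset.range (R + 1), t.base x j := by
  ext y
  simp only [tri, base, Set.mem_setOf_eq, Set.mem_iUnion, Finset.mem_range, exists_prop]
  constructor
  · rintro ⟨j, hj, h⟩; exact ⟨j, by omega, h⟩
  · rintro ⟨j, hj, h⟩; exact ⟨j, by omega, h⟩

lemma tri_finite (t : TreeData V) (x : V) (R : ℕ) : (t.tri x R).Finite := by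
  rw [tri_eq_biUnion]
  exact Set.Finite.biUnion (Finset.range (R + 1)).finite_toSet
    (fun j _ => t.base_finite j x)

lemma self_mem_tri (t : TreeData V) (x : V) (R : ℕ) : x ∈ t.tri x R :=
  ⟨0, Nat.zero_le _, rfl⟩

lemma ht_le_of_mem_tri (t : TreeData V) {x y : V} {R : ℕ} (h : y ∈ t.tri x R) :
    t.ht y ≤ t.ht x := by
  obtain ⟨j, _, hj⟩ := h
  have := t.ht_iterate y j
  rw [hj] at this
  omega

lemma tri_top_eq (t : TreeData V) {x x' : V} {R R' : ℕ}
    (h : t.tri x R = t.tri x' R') : x = x' := by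
  have h1 : x ∈ t.tri x' R' := h ▸ t.self_mem_tri x R
  have h2 : x' ∈ t.tri x R := h.symm ▸ t.self_mem_tri x' R'
  obtain ⟨j, _, hj⟩ := h1
  have hht := t.ht_le_of_mem_tri h2
  have := t.ht_iterate x j
  rw [hj] at this
  have : j = 0 := by omega
  rw [this] at hj
  simpa using hj

lemma tri_subset_tri (t : TreeData V) {x x' : V} {R R' p : ℕ}
    (hp : t.pred^[p] x' = x) (hR : R' + p ≤ R) : t.tri x' R' ⊆ t.tri x R := by
  rintro y ⟨i, hi, hy⟩
  refine ⟨p + i, by omega, ?_⟩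
  rw [Function.iterate_add_apply, hy, hp]

lemma base_subset_tri (t : TreeData V) {x x' : V} {m j R : ℕ}
    (hp : t.pred^[j] x = x') (hm : j + m ≤ R) : t.base x m ⊆ t.tri x' R := by
  intro y hy
  refine ⟨j + m, hm, ?_⟩
  rw [Function.iterate_add_apply, hy, hp]

end TreeData

namespace TreeData

attribute [local instance] Classical.propDecidable

variable {V : Type*}

lemma exists_ge_of_card {s : Finset ℕ} {k : ℕ} (hk : 1 ≤ k) (h : k ≤ s.card) :
    ∃ n ∈ s, k - 1 ≤ n := by
  by_contra hc
  push_neg at hc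
  have hsub : s ⊆ Finset.range (k - 1) := fun n hn => Finset.mem_range.2 (hc n hn)
  have := Finset.card_le_card hsub
  rw [Finset.card_range] at this
  omega

lemma exists_deep (t : TreeData V) (𝒢 : Finset (V × ℕ))
    (hmax : ∀ a ∈ 𝒢, ∀ b ∈ 𝒢, t.tri a.1 a.2 ⊆ t.tri b.1 b.2 → t.tri a.1 a.2 = t.tri b.1 b.2)
    {x : V} {k : ℕ} (hk : 1 ≤ k)
    (hcard : k ≤ (𝒢.filter fun a : V × ℕ => x ∈ t.tri a.1 a.2).card) :
    ∃ a ∈ 𝒢, ∃ j, t.pred^[j] x = a.1 ∧ j + (k - 1) ≤ a.2 := by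
  classical
  set S := 𝒢.filter (fun a : V × ℕ => x ∈ t.tri a.1 a.2) with hS
  set J : V × ℕ → ℕ := fun a => (t.ht a.1 - t.ht x).toNat with hJ
  set D : V × ℕ → ℕ := fun a => a.2 - J a with hD
  -- witness property
  have hwit : ∀ a ∈ S, t.pred^[J a] x = a.1 ∧ J a ≤ a.2 := by
    intro a ha
    rw [hS, Finset.mem_filter] at ha
    obtain ⟨_, j, hjR, hj⟩ := ha
    have hht := t.ht_iterate x j
    rw [hj] at hht
    have : J a = j := by simp only [hJ]; omega
    rw [this]
    exact ⟨hj, hjR⟩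
  -- injectivity of D on S, ordered version
  have key : ∀ a ∈ S, ∀ b ∈ S, J a ≤ J b → D a = D b → a = b := by
    intro a ha b hb hJle hDe
    obtain ⟨hwa, hja⟩ := hwit a ha
    obtain ⟨hwb, hjb⟩ := hwit b hb
    have hpa : t.pred^[J b - J a] a.1 = b.1 := by
      rw [← hwa, ← Function.iterate_add_apply]
      have : J b - J a + J a = J b := by omega
      rw [this, hwb]
    have hRle : a.2 + (J b - J a) ≤ b.2 := by
      simp only [hD] at hDe; omega
    have hsub : t.tri a.1 a.2 ⊆ t.tri b.1 b.2 := t.tri_subset_tri hpa hRle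
    have ha' : a ∈ 𝒢 := Finset.mem_of_mem_filter a ha
    have hb' : b ∈ 𝒢 := Finset.mem_of_mem_filter b hb
    have heq := hmax a ha' b hb' hsub
    have hv : a.1 = b.1 := t.tri_top_eq heq
    have hJeq : J a = J b := by simp only [hJ, hv]
    have hR : a.2 = b.2 := by simp only [hD] at hDe; omega
    exact Prod.ext hv hR
  have hinj : ∀ a ∈ S, ∀ b ∈ S, D a = D b → a = b := by
    intro a ha b hb hDe
    rcases le_total (J a) (J b) with h | h
    · exact key a ha b hb h hDe
    · exact (key b hb a ha h hDe.symm).symm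
  have hcardim : k ≤ (S.image D).card := by
    rw [Finset.card_image_of_injOn
      (fun a ha b hb hab => hinj a (by simpa using ha) b (by simpa using hb) hab)]
    exact hcard
  obtain ⟨n, hn, hnge⟩ := exists_ge_of_card hk hcardim
  obtain ⟨a, ha, rfl⟩ := Finset.mem_image.1 hn
  obtain ⟨hwa, hja⟩ := hwit a ha
  refine ⟨a, Finset.mem_of_mem_filter a ha, J a, hwa, ?_⟩
  simp only [hD] at hnge
  omega

lemma esize_finite {E : Set V} (hE : E.Finite) : esize E = hE.toFinset.card := by
  classical
  have : Fintype E := hE.fintype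
  rw [esize, tsum_fintype]
  simp [Set.Finite.card_toFinset]

lemma count_key (t : TreeData V) (hthick : t.Thick) (𝒢 : Finset (V × ℕ))
    (hmax : ∀ a ∈ 𝒢, ∀ b ∈ 𝒢, t.tri a.1 a.2 ⊆ t.tri b.1 b.2 → t.tri a.1 a.2 = t.tri b.1 b.2)
    {k : ℕ} (hk : 1 ≤ k) (F : Finset V)
    (hF : ∀ x ∈ F, k ≤ (𝒢.filter fun a : V × ℕ => x ∈ t.tri a.1 a.2).card)
    (Gfin : Finset V)
    (hGfin : ∀ y : V, ∀ a ∈ 𝒢, y ∈ t.tri a.1 a.2 → y ∈ Gfin) :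
    2 ^ (k - 1) * F.card ≤ Gfin.card := by
  classical
  set B : V → Finset V := fun x => (t.base_finite (k - 1) x).toFinset with hB
  have hsub : ∀ x ∈ F, B x ⊆ Gfin := by
    intro x hx y hy
    obtain ⟨a, ha, j, hj, hjle⟩ := t.exists_deep 𝒢 hmax hk (hF x hx)
    have hy' : y ∈ t.base x (k - 1) := by simpa [hB] using hy
    exact hGfin y a ha (t.base_subset_tri hj hjle hy')
  have hdisj : ∀ x ∈ F, ∀ x' ∈ F, x ≠ x' → Disjoint (B x) (B x') := by
    intro x _ x' _ hne
    rw [Finset.disjoint_left]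
    intro y hy hy'
    have h1 : y ∈ t.base x (k - 1) := by simpa [hB] using hy
    have h2 : y ∈ t.base x' (k - 1) := by simpa [hB] using hy'
    exact hne (h1.symm.trans h2)
  have hcard : ∀ x, 2 ^ (k - 1) ≤ (B x).card := by
    intro x
    have := t.base_card hthick (k - 1) x
    rwa [Set.ncard_eq_toFinset_card _ (t.base_finite (k - 1) x)] at this
  calc 2 ^ (k - 1) * F.card = ∑ _x ∈ F, 2 ^ (k - 1) := by
        rw [Finset.sum_const, smul_eq_mul, mul_comm]
  _ ≤ ∑ x ∈ F, (B x).card := Finset.sum_le_sum fun x _ => hcard x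
  _ = (F.biUnion B).card := (Finset.card_biUnion hdisj).symm
  _ ≤ Gfin.card := Finset.card_le_card (Finset.biUnion_subset.2 hsub)

end TreeData

/-- For a finite collection `𝒢` of maximal triangles with union `G`, and
every `r ∈ [1,∞)`, `‖∑_{T ∈ 𝒢} 1_T‖_r ≤ A_r ‖1_G‖_r` with
`A_r = (4 ∑_{k≥1} k^r 2^{-k})^{1/r}`. -/
theorem stmt9 {V : Type*} (t : TreeData V) (hthick : t.Thick) (𝒢 : Finset (V × ℕ))
    (hmax : ∀ a ∈ 𝒢, ∀ b ∈ 𝒢, t.tri a.1 a.2 ⊆ t.tri b.1 b.2 → t.tri a.1 a.2 = t.tri b.1 b.2)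
    (r : ℝ) (hr : 1 ≤ r) :
    (∑' x : V, (∑ a ∈ 𝒢, (t.tri a.1 a.2).indicator (fun _ => (1 : ℝ≥0∞)) x) ^ r) ^ (1 / r) ≤
      (4 * ∑' k : ℕ, (k : ℝ≥0∞) ^ r * (2 : ℝ≥0∞) ^ (-(k : ℤ))) ^ (1 / r) *
        (TreeData.esize (⋃ a ∈ 𝒢, t.tri a.1 a.2)) ^ (1 / r) := by
  classical
  have hrpos : (0 : ℝ) < r := lt_of_lt_of_le one_pos hr
  set N : V → ℕ := fun x => (𝒢.filter fun a : V × ℕ => x ∈ t.tri a.1 a.2).card with hN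
  -- pointwise identity
  have hpt : ∀ x : V,
      (∑ a ∈ 𝒢, (t.tri a.1 a.2).indicator (fun _ => (1 : ℝ≥0∞)) x) = (N x : ℝ≥0∞) := by
    intro x
    simp only [Set.indicator_apply, hN]
    rw [Finset.sum_boole]
  -- the union set
  have hGfin : (⋃ a ∈ 𝒢, t.tri a.1 a.2).Finite :=
    Set.Finite.biUnion 𝒢.finite_toSet (fun a _ => t.tri_finite a.1 a.2)
  set Gfin := hGfin.toFinset with hGfinDef
  have hmemG : ∀ y : V, ∀ a ∈ 𝒢, y ∈ t.tri a.1 a.2 → y ∈ Gfin := by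
    intro y a ha hy
    rw [hGfinDef, Set.Finite.mem_toFinset]
    exact Set.mem_biUnion ha hy
  have hesize : TreeData.esize (⋃ a ∈ 𝒢, t.tri a.1 a.2) = (Gfin.card : ℝ≥0∞) :=
    TreeData.esize_finite hGfin
  set C : ℝ≥0∞ := (Gfin.card : ℝ≥0∞) with hC
  -- reduce tsum to a finite sum
  have h0 : ∀ x : V, x ∉ Gfin → ((N x : ℝ≥0∞)) ^ r = 0 := by
    intro x hx
    have hx0 : N x = 0 := by
      rw [hN, Finset.card_eq_zero, Finset.filter_eq_empty_iff]
      intro a ha hxa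
      exact hx (hmemG x a ha hxa)
    rw [hx0]
    simpa using ENNReal.zero_rpow_of_pos hrpos
  set m := 𝒢.card with hm
  have hmaps : ∀ x ∈ Gfin, N x ∈ Finset.range (m + 1) := fun x _ =>
    Finset.mem_range.2 (Nat.lt_succ_of_le (Finset.card_filter_le _ _))
  set Sig : ℝ≥0∞ := ∑' k : ℕ, (k : ℝ≥0∞) ^ r * (2 : ℝ≥0∞) ^ (-(k : ℤ)) with hSig
  -- termwise bound
  have hterm : ∀ k ∈ Finset.range (m + 1),
      (((Gfin.filter fun x => N x = k).card : ℝ≥0∞)) * (k : ℝ≥0∞) ^ r ≤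
        (k : ℝ≥0∞) ^ r * (2 : ℝ≥0∞) ^ (-(k : ℤ)) * (2 * C) := by
    intro k _
    rcases Nat.eq_zero_or_pos k with rfl | hk
    · simp [ENNReal.zero_rpow_of_pos hrpos]
    · have hF : ∀ x ∈ Gfin.filter fun x => N x = k,
          k ≤ (𝒢.filter fun a : V × ℕ => x ∈ t.tri a.1 a.2).card := by
        intro x hx
        have hxk := (Finset.mem_filter.1 hx).2
        simp only [hN] at hxk
        omega
      have hnat : 2 ^ (k - 1) * (Gfin.filter fun x => N x = k).card ≤ Gfin.card :=
        t.count_key hthick 𝒢 hmax hk (Gfin.filter fun x => N x = k) hF Gfin hmemG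
      have hcast : (2 : ℝ≥0∞) ^ ((k - 1 : ℕ) : ℤ) *
          ((Gfin.filter fun x => N x = k).card : ℝ≥0∞) ≤ C := by
        rw [zpow_natCast, hC]
        exact_mod_cast hnat
      have hne : (2 : ℝ≥0∞) ≠ 0 := two_ne_zero
      have hnt : (2 : ℝ≥0∞) ≠ ⊤ := ENNReal.ofNat_ne_top
      have hz : (2 : ℝ≥0∞) ^ (-(k : ℤ) + 1) * (2 : ℝ≥0∞) ^ ((k - 1 : ℕ) : ℤ) = 1 := by
        rw [← ENNReal.zpow_add hne hnt]
        have he : (-(k : ℤ) + 1) + ((k - 1 : ℕ) : ℤ) = 0 := by push_cast; omega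
        rw [he, zpow_zero]
      have hsplit : (2 : ℝ≥0∞) ^ (-(k : ℤ) + 1) = 2 * (2 : ℝ≥0∞) ^ (-(k : ℤ)) := by
        rw [ENNReal.zpow_add hne hnt]
        rw [zpow_one, mul_comm]
      have hcard : ((Gfin.filter fun x => N x = k).card : ℝ≥0∞) ≤
          (2 : ℝ≥0∞) ^ (-(k : ℤ) + 1) * C := by
        calc ((Gfin.filter fun x => N x = k).card : ℝ≥0∞)
            = (2 : ℝ≥0∞) ^ (-(k : ℤ) + 1) *
              ((2 : ℝ≥0∞) ^ ((k - 1 : ℕ) : ℤ) *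
                ((Gfin.filter fun x => N x = k).card : ℝ≥0∞)) := by
              rw [← mul_assoc, hz, one_mul]
        _ ≤ _ := mul_le_mul_right hcast _
      calc (((Gfin.filter fun x => N x = k).card : ℝ≥0∞)) * (k : ℝ≥0∞) ^ r
          ≤ ((2 : ℝ≥0∞) ^ (-(k : ℤ) + 1) * C) * (k : ℝ≥0∞) ^ r :=
            mul_le_mul_left hcard _
      _ = (2 * (2 : ℝ≥0∞) ^ (-(k : ℤ)) * C) * (k : ℝ≥0∞) ^ r := by rw [hsplit]
      _ = (k : ℝ≥0∞) ^ r * (2 : ℝ≥0∞) ^ (-(k : ℤ)) * (2 * C) := by ring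
  -- main finite-sum bound
  have hmain : ∑' x : V, ((N x : ℝ≥0∞)) ^ r ≤ (4 * Sig) * C := by
    rw [tsum_eq_sum h0]
    rw [← Finset.sum_fiberwise_of_maps_to hmaps (fun x => ((N x : ℝ≥0∞)) ^ r)]
    have hinner : ∀ k ∈ Finset.range (m + 1),
        ∑ x ∈ Gfin.filter (fun x => N x = k), ((N x : ℝ≥0∞)) ^ r =
          (((Gfin.filter fun x => N x = k).card : ℝ≥0∞)) * (k : ℝ≥0∞) ^ r := by
      intro k _
      rw [Finset.sum_congr rfl (fun x hx => by
        rw [(Finset.mem_filter.1 hx).2])]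
      rw [Finset.sum_const, nsmul_eq_mul]
    calc ∑ k ∈ Finset.range (m + 1), ∑ x ∈ Gfin.filter (fun x => N x = k), ((N x : ℝ≥0∞)) ^ r
        = ∑ k ∈ Finset.range (m + 1),
            (((Gfin.filter fun x => N x = k).card : ℝ≥0∞)) * (k : ℝ≥0∞) ^ r :=
          Finset.sum_congr rfl hinner
    _ ≤ ∑ k ∈ Finset.range (m + 1),
            (k : ℝ≥0∞) ^ r * (2 : ℝ≥0∞) ^ (-(k : ℤ)) * (2 * C) :=
          Finset.sum_le_sum hterm
    _ = (∑ k ∈ Finset.range (m + 1), (k : ℝ≥0∞) ^ r * (2 : ℝ≥0∞) ^ (-(k : ℤ))) * (2 * C) :=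
          (Finset.sum_mul _ _ _).symm
    _ ≤ Sig * (2 * C) := mul_le_mul_left (ENNReal.sum_le_tsum _) _
    _ = (2 * Sig) * C := by ring
    _ ≤ (4 * Sig) * C := by
          gcongr
          norm_num
  -- conclude
  rw [hesize]
  have hone : (0 : ℝ) ≤ 1 / r := by positivity
  calc (∑' x : V, (∑ a ∈ 𝒢, (t.tri a.1 a.2).indicator (fun _ => (1 : ℝ≥0∞)) x) ^ r) ^ (1 / r)
      = (∑' x : V, ((N x : ℝ≥0∞)) ^ r) ^ (1 / r) := by
        congr 1
        exact tsum_congr fun x => by rw [hpt x]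
  _ ≤ ((4 * Sig) * C) ^ (1 / r) := ENNReal.rpow_le_rpow hmain hone
  _ = (4 * Sig) ^ (1 / r) * C ^ (1 / r) := ENNReal.mul_rpow_of_nonneg _ _ hone
end
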